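/- If θ is a rational number, cos(πθ) ≠ 0, and tan(πθ)² is rational, then tan(πθ) ∈ {0, 1/√3, -1/√3, 1, -1, √3, -√3}. -/

import Mathlib

/-!
Write `t = tan (π θ)`. Since `cos (2πθ) = (1 - t²) / (1 + t²)`, the rationality of `t²` makes
`cos (2πθ)` rational, so by Niven's theorem it is one of `-1, -1/2, 0, 1/2, 1`. The value `-1`
is excluded because `(1 - t²) / (1 + t²) > -1`; the other four give `t² = 3, 1, 1/3, 0`.
-/

open Real

lemma Real.cos_two_mul_eq_one_sub_tan_sq_div {x : ℝ} (hx : cos x ≠ 0) :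
    cos (2 * x) = (1 - tan x ^ 2) / (1 + tan x ^ 2) := by
  have hcos_sq : cos x ^ 2 = (1 + tan x ^ 2)⁻¹ := (inv_one_add_tan_sq hx).symm
  rw [cos_two_mul, hcos_sq]
  field_simp
  ring

lemma Real.tan_sq_pi_mul_rat_mem {r : ℚ} (hc : cos (π * r) ≠ 0)
    (h : ∃ q : ℚ, tan (π * r) ^ 2 = q) :
    tan (π * r) ^ 2 ∈ ({0, 1 / 3, 1, 3} : Set ℝ) := by
  obtain ⟨q, hq⟩ := h
  set t := tan (π * r)
  have hpos : 0 < 1 + t ^ 2 := by positivity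
  have hcos : cos (2 * (π * r)) = (1 - t ^ 2) / (1 + t ^ 2) :=
    cos_two_mul_eq_one_sub_tan_sq_div hc
  have hniven := niven (θ := 2 * (π * r)) ⟨2 * r, by push_cast; ring⟩
    ⟨(1 - q) / (1 + q), by rw [hcos, hq]; push_cast; rfl⟩
  rw [hcos] at hniven
  simp only [Set.mem_insert_iff, Set.mem_singleton_iff] at hniven ⊢
  rcases hniven with h | h | h | h | h <;> rw [div_eq_iff hpos.ne'] at h
  · linarith
  · right; right; right; linarith
  · right; right; left; linarith
  · right; left; linarith
  · left; linarith

theorem rational_tan_sq_values (θ : ℚ) (hc : Real.cos (Real.pi * θ) ≠ 0)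
    (h : ∃ q : ℚ, Real.tan (Real.pi * θ) ^ 2 = q) :
    Real.tan (Real.pi * θ) ∈
      ({0, 1 / Real.sqrt 3, -(1 / Real.sqrt 3), 1, -1,
        Real.sqrt 3, -Real.sqrt 3} : Set ℝ) := by
  have hsq := tan_sq_pi_mul_rat_mem hc h
  have h3 : √3 ^ 2 = 3 := sq_sqrt (by norm_num)
  simp only [Set.mem_insert_iff, Set.mem_singleton_iff] at hsq ⊢
  rcases hsq with h0 | h13 | h1 | h3'
  · exact .inl (pow_eq_zero_iff two_ne_zero |>.mp h0)
  · rw [show (1 / 3 : ℝ) = (1 / √3) ^ 2 by rw [div_pow, h3, one_pow]] at h13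
    rcases sq_eq_sq_iff_eq_or_eq_neg.mp h13 with h | h <;> simp [h]
  · rw [← one_pow 2] at h1
    rcases sq_eq_sq_iff_eq_or_eq_neg.mp h1 with h | h <;> simp [h]
  · rw [← h3] at h3'
    rcases sq_eq_sq_iff_eq_or_eq_neg.mp h3' with h | h <;> simp [h]
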